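/- Let c_1, c_2, … be real numbers, and in ℝ[[z]] set C(z) := 1 + c_1 z^2 + c_2 z^3 + c_3 z^4 + ⋯. For each k ≥ 1, define m̄_k := (1/(k+1)) · [u^{k+1}]{C(u)^{k+1}}, the coefficient of u^{k+1} in C(u)^{k+1} divided by k+1, and set Ā(z) := m̄_1 z^2 + m̄_2 z^3 + m̄_3 z^4 + ⋯. Then the formal power series z·exp(Ā(z)) and z/C(z) are compositional inverses of each other. -/

import Mathlib

open PowerSeries

/-- Composition `f(g)` of formal power series; this gives the usual composition
whenever `g` has zero constant term (then `coeff n (g^m) = 0` for `m > n`). -/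
noncomputable def psComp (f g : PowerSeries ℝ) : PowerSeries ℝ :=
  PowerSeries.mk fun n =>
    ∑ m ∈ Finset.range (n + 1), (PowerSeries.coeff m f) * (PowerSeries.coeff n (g ^ m))

/-- The series `C(z) = 1 + c₁ z² + c₂ z³ + ⋯` built from a sequence `(c_k)_{k ≥ 1}`. -/
noncomputable def seriesC (c : ℕ → ℝ) : PowerSeries ℝ :=
  PowerSeries.mk fun n => if n = 0 then 1 else if n = 1 then 0 else c (n - 1)

/-- `m̄_k := (1/(k+1)) · [u^{k+1}] C(u)^{k+1}`. -/
noncomputable def mbar (c : ℕ → ℝ) (k : ℕ) : ℝ :=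
  (1 / (k + 1 : ℝ)) * PowerSeries.coeff (k + 1) (seriesC c ^ (k + 1))

/-- `Ā(z) := m̄₁ z² + m̄₂ z³ + ⋯`. -/
noncomputable def seriesAbar (c : ℕ → ℝ) : PowerSeries ℝ :=
  PowerSeries.mk fun n => if n ≤ 1 then 0 else mbar c (n - 1)

/-!
Let `G = X · U` be the compositional inverse of `F = X / C`, so that `U ∘ F = C`. Substituting
`w = F(z)` in the residue of `P(w) / w^(k+1)` gives `[w^k] P = [z^k] P(F) · F' · C^(k+1)`.
For `P = U'/U` the chain rule turns `P(F) · F'` into `C'/C`, hence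
`[w^k] U'/U = [z^k] C' C^k = [z^(k+1)] C^(k+1) = [w^k] Ā'`. So `U` and `exp Ā` have the same
logarithmic derivative and constant term `1`, i.e. `U = exp Ā`.
-/

section CommRing

variable {R : Type*} [CommRing R]

theorem coeff_subst_eq_sum_range {f g : R⟦X⟧} (hg : constantCoeff g = 0) {n N : ℕ}
    (hN : n < N) :
    coeff n (f.subst g) = ∑ m ∈ Finset.range N, coeff m f * coeff n (g ^ m) := by
  obtain ⟨h, rfl⟩ := X_dvd_iff.mpr hg
  rw [coeff_subst' (HasSubst.of_constantCoeff_zero' hg)]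
  refine finsum_eq_sum_of_support_subset _ fun m hm => ?_
  rw [Finset.coe_range, Set.mem_Iio]
  by_contra hmN
  simp [mul_pow, coeff_X_pow_mul', show ¬ m ≤ n by omega] at hm

theorem constantCoeff_subst_of_constantCoeff_eq_zero {f g : R⟦X⟧} (hg : constantCoeff g = 0) :
    constantCoeff (f.subst g) = constantCoeff f := by
  simpa using coeff_subst_eq_sum_range (f := f) hg zero_lt_one

theorem coeff_subst_mul {f g : R⟦X⟧} (hg : constantCoeff g = 0) (Q : R⟦X⟧) (n : ℕ) :
    coeff n (f.subst g * Q) = ∑ m ∈ Finset.range (n + 1), coeff m f * coeff n (g ^ m * Q) := by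
  simp_rw [coeff_mul, Finset.mul_sum]
  rw [Finset.sum_comm]
  refine Finset.sum_congr rfl fun p hp => ?_
  have hp1 : p.1 < n + 1 := by have := Finset.HasAntidiagonal.mem_antidiagonal.mp hp; omega
  rw [coeff_subst_eq_sum_range hg hp1, Finset.sum_mul]
  simp_rw [mul_assoc]

theorem coeff_pow_mul_derivative [IsAddTorsionFree R] (C : R⟦X⟧) (n : ℕ) :
    coeff n (C ^ n * d⁄dX R C) = coeff (n + 1) (C ^ (n + 1)) := by
  have h := congrArg (coeff n) (derivative_pow C (n + 1))
  rw [coeff_derivative, add_tsub_cancel_right, mul_assoc, ← nsmul_eq_mul, map_nsmul,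
    ← Nat.cast_succ, mul_comm, ← nsmul_eq_mul] at h
  exact ((smul_right_inj n.succ_ne_zero).mp h).symm

end CommRing

section Field

variable {K : Type*} [Field K] {C : K⟦X⟧}

theorem derivative_X_mul_inv (C : K⟦X⟧) :
    d⁄dX K (X * C⁻¹) = C⁻¹ - X * (C⁻¹ ^ 2 * d⁄dX K C) := by
  rw [Derivation.leibniz, derivative_inv', derivative_X, smul_eq_mul, smul_eq_mul]
  ring

theorem coeff_pow_mul_derivative_X_mul_inv [CharZero K] (hC : constantCoeff C ≠ 0) (t : ℕ) :
    coeff t (C ^ (t + 1) * d⁄dX K (X * C⁻¹)) = if t = 0 then 1 else 0 := by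
  have hCC : C * C⁻¹ = 1 := PowerSeries.mul_inv_cancel C hC
  rcases t with _ | s
  · simp [hC]
  · have h : C ^ (s + 2) * d⁄dX K (X * C⁻¹) = C ^ (s + 1) - X * (C ^ s * d⁄dX K C) := by
      rw [derivative_X_mul_inv]
      linear_combination (C ^ (s + 1) - X * C ^ s * d⁄dX K C * (C * C⁻¹ + 1)) * hCC
    rw [h, map_sub, coeff_succ_X_mul, coeff_pow_mul_derivative, sub_self, if_neg s.succ_ne_zero]

theorem coeff_pow_mul_derivative_mul_pow [CharZero K] (hC : constantCoeff C ≠ 0) {m k : ℕ}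
    (hmk : m ≤ k) :
    coeff k ((X * C⁻¹) ^ m * (d⁄dX K (X * C⁻¹) * C ^ (k + 1))) = if m = k then 1 else 0 := by
  obtain ⟨t, rfl⟩ := Nat.exists_eq_add_of_le hmk
  have h : (X * C⁻¹) ^ m * (d⁄dX K (X * C⁻¹) * C ^ (m + t + 1))
      = X ^ m * (C ^ (t + 1) * d⁄dX K (X * C⁻¹)) := by
    have hCC : (C * C⁻¹) ^ m = 1 := by rw [PowerSeries.mul_inv_cancel C hC, one_pow]
    linear_combination (X ^ m * C ^ (t + 1) * d⁄dX K (X * C⁻¹)) * hCC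
  rw [h, coeff_X_pow_mul', if_pos (Nat.le_add_right m t), Nat.add_sub_cancel_left,
    coeff_pow_mul_derivative_X_mul_inv hC]
  simp

theorem coeff_subst_mul_derivative_mul_pow [CharZero K] (hC : constantCoeff C ≠ 0) (P : K⟦X⟧)
    (k : ℕ) :
    coeff k (P.subst (X * C⁻¹) * (d⁄dX K (X * C⁻¹) * C ^ (k + 1))) = coeff k P := by
  rw [coeff_subst_mul (by simp), Finset.sum_eq_single_of_mem k (Finset.self_mem_range_succ k)]
  · rw [coeff_pow_mul_derivative_mul_pow hC le_rfl, if_pos rfl, mul_one]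
  · intro m hm hmk
    rw [coeff_pow_mul_derivative_mul_pow hC (Finset.mem_range_succ_iff.mp hm), if_neg hmk,
      mul_zero]

theorem subst_eq_of_subst_X_mul_eq_X (hC : constantCoeff C ≠ 0) {U : K⟦X⟧}
    (hU : (X * U).subst (X * C⁻¹) = X) : U.subst (X * C⁻¹) = C := by
  have hsubst : HasSubst (X * C⁻¹) := HasSubst.of_constantCoeff_zero' (by simp)
  rw [subst_mul hsubst, subst_X hsubst, mul_assoc] at hU
  have h : C⁻¹ * U.subst (X * C⁻¹) = 1 := mul_left_cancel₀ X_ne_zero (hU.trans (mul_one X).symm)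
  linear_combination C * h - U.subst (X * C⁻¹) * PowerSeries.mul_inv_cancel C hC

theorem coeff_derivative_mul_inv_of_subst_eq [CharZero K] (hC : constantCoeff C ≠ 0) {U : K⟦X⟧}
    (hU : U.subst (X * C⁻¹) = C) (k : ℕ) :
    coeff k (d⁄dX K U * U⁻¹) = coeff (k + 1) (C ^ (k + 1)) := by
  have hF : constantCoeff (X * C⁻¹) = 0 := by simp
  have hsubst : HasSubst (X * C⁻¹) := HasSubst.of_constantCoeff_zero' hF
  have hU0 : constantCoeff U ≠ 0 := by
    rwa [← constantCoeff_subst_of_constantCoeff_eq_zero hF, hU]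
  have hUinv : U⁻¹.subst (X * C⁻¹) = C⁻¹ := by
    have h : U⁻¹.subst (X * C⁻¹) * U.subst (X * C⁻¹) = 1 := by
      rw [← subst_mul hsubst, PowerSeries.inv_mul_cancel U hU0, ← coe_substAlgHom hsubst,
        map_one]
    rw [hU] at h
    exact (PowerSeries.eq_inv_iff_mul_eq_one hC).mpr h
  have hchain : (d⁄dX K U).subst (X * C⁻¹) * d⁄dX K (X * C⁻¹) = d⁄dX K C := by
    rw [← derivative_subst hsubst, hU]
  have h : (d⁄dX K U * U⁻¹).subst (X * C⁻¹) * (d⁄dX K (X * C⁻¹) * C ^ (k + 1))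
      = C ^ k * d⁄dX K C := by
    rw [subst_mul hsubst]
    calc (d⁄dX K U).subst (X * C⁻¹) * U⁻¹.subst (X * C⁻¹) * (d⁄dX K (X * C⁻¹) * C ^ (k + 1))
        = (d⁄dX K U).subst (X * C⁻¹) * d⁄dX K (X * C⁻¹) * (C⁻¹ * C) * C ^ k := by
          rw [hUinv]; ring
      _ = C ^ k * d⁄dX K C := by rw [hchain, PowerSeries.inv_mul_cancel C hC, mul_one, mul_comm]
  rw [← coeff_subst_mul_derivative_mul_pow hC, h, coeff_pow_mul_derivative]

theorem eq_of_derivative_mul_inv_eq [CharZero K] {f g : K⟦X⟧} (hg : constantCoeff g ≠ 0)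
    (hfg : constantCoeff f = constantCoeff g) (h : d⁄dX K f * f⁻¹ = d⁄dX K g * g⁻¹) :
    f = g := by
  have hff := PowerSeries.mul_inv_cancel f (hfg ▸ hg)
  have hgg := PowerSeries.mul_inv_cancel g hg
  have hquot : f * g⁻¹ = 1 := by
    refine derivative.ext ?_ (by simp [hfg, hg])
    rw [Derivation.leibniz, derivative_inv', derivative_one, smul_eq_mul, smul_eq_mul]
    linear_combination f * g⁻¹ * h - g⁻¹ * d⁄dX K f * hff
  linear_combination g * hquot - f * hgg

theorem derivative_exp_subst_mul_inv [CharZero K] {A : K⟦X⟧} (hA : constantCoeff A = 0) :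
    d⁄dX K ((exp K).subst A) * ((exp K).subst A)⁻¹ = d⁄dX K A := by
  have hE : constantCoeff ((exp K).subst A) ≠ 0 := by
    simp [constantCoeff_subst_of_constantCoeff_eq_zero hA]
  rw [derivative_subst (HasSubst.of_constantCoeff_zero' hA), derivative_exp]
  linear_combination d⁄dX K A * PowerSeries.mul_inv_cancel _ hE

end Field

theorem psComp_eq_subst (f : PowerSeries ℝ) {g : PowerSeries ℝ} (hg : constantCoeff g = 0) :
    psComp f g = f.subst g := by
  ext n
  rw [psComp, coeff_mk, coeff_subst_eq_sum_range hg n.lt_succ_self]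

theorem constantCoeff_seriesC (c : ℕ → ℝ) : constantCoeff (seriesC c) = 1 := by
  simp [seriesC, ← coeff_zero_eq_constantCoeff_apply]

theorem constantCoeff_seriesAbar (c : ℕ → ℝ) : constantCoeff (seriesAbar c) = 0 := by
  simp [seriesAbar, ← coeff_zero_eq_constantCoeff_apply]

theorem coeff_derivative_seriesAbar (c : ℕ → ℝ) (k : ℕ) :
    coeff k (d⁄dX ℝ (seriesAbar c)) = coeff (k + 1) (seriesC c ^ (k + 1)) := by
  rcases k with _ | k
  · simp [coeff_derivative, seriesAbar, seriesC]
  · rw [coeff_derivative, seriesAbar, coeff_mk, if_neg (by omega), mbar]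
    field_simp
    push_cast
    ring

/-- With `C(z) = 1 + c₁ z² + c₂ z³ + ⋯`,
`m̄_k = (1/(k+1))·[u^{k+1}]{C(u)^{k+1}}` and `Ā(z) = m̄₁ z² + m̄₂ z³ + ⋯`, the formal
power series `z·exp(Ā(z))` and `z/C(z)` are compositional inverses of each other. -/
theorem z_exp_Abar_inverse_of_z_div_C (c : ℕ → ℝ) :
    psComp (PowerSeries.X * psComp (PowerSeries.exp ℝ) (seriesAbar c))
        (PowerSeries.X * (seriesC c)⁻¹) = PowerSeries.X ∧
    psComp (PowerSeries.X * (seriesC c)⁻¹)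
        (PowerSeries.X * psComp (PowerSeries.exp ℝ) (seriesAbar c)) = PowerSeries.X := by
  have hC : constantCoeff (seriesC c) ≠ 0 := by simp [constantCoeff_seriesC]
  have hA := constantCoeff_seriesAbar c
  have hF0 : constantCoeff (X * (seriesC c)⁻¹) = 0 := by simp
  have hF1 : IsUnit (coeff 1 (X * (seriesC c)⁻¹)) := by simp [hC]
  rw [psComp_eq_subst _ hA, psComp_eq_subst _ hF0, psComp_eq_subst _ (by simp)]
  suffices hG : (X * (seriesC c)⁻¹).substInvOfIsUnit hF1 = X * (exp ℝ).subst (seriesAbar c) by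
    rw [← hG]
    exact ⟨subst_substInvOfIsUnit_left _ hF0 hF1, subst_substInvOfIsUnit_right _ hF0 hF1⟩
  obtain ⟨U, hU⟩ := X_dvd_iff.mpr (constantCoeff_substInvOfIsUnit _ hF1)
  have hUC : U.subst (X * (seriesC c)⁻¹) = seriesC c :=
    subst_eq_of_subst_X_mul_eq_X hC (hU ▸ subst_substInvOfIsUnit_left _ hF0 hF1)
  have hU0 : constantCoeff U = 1 := by
    rw [← constantCoeff_subst_of_constantCoeff_eq_zero hF0, hUC, constantCoeff_seriesC]
  have hlog : d⁄dX ℝ U * U⁻¹ = d⁄dX ℝ (seriesAbar c) := by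
    ext k
    rw [coeff_derivative_mul_inv_of_subst_eq hC hUC, coeff_derivative_seriesAbar]
  have hE0 : constantCoeff ((exp ℝ).subst (seriesAbar c)) = 1 := by
    simp [constantCoeff_subst_of_constantCoeff_eq_zero hA]
  rw [hU, eq_of_derivative_mul_inv_eq (by simp [hE0]) (by rw [hU0, hE0])
    (hlog.trans (derivative_exp_subst_mul_inv hA).symm)]
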